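/- The limit lim_{ρ→∞} (−5ρ⁵/(8√3))·(ζ(k) − 2√3 ω(k)/(βρ)) equals k_x³(k_x² + 5k_y²)/k¹⁰, where ζ(k) = arctan((k_y − √3 k_x)/(ρk²)) − arctan((k_y + √3 k_x)/(ρk²)) and ω(k) = −β k_x/(k² + ρ⁻²). -/

import Mathlib

/-!
Put `t = 1/ρ`. The bracket becomes `R(t) = arctan (A t/K) - arctan (B t/K) + (B - A) t/(K + t²)`
with `A = k_y - √3 k_x`, `B = k_y + √3 k_x`, `K = k²`. The even function `R'` vanishes at `0`,
and `A² + AB + B² = 3K` kills its `t²` coefficient too, so `R'(t) = t⁴ q(t)` with `q` rational and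
regular at `0`; one application of l'Hôpital's rule then gives `R(t)/t⁵ → q(0)/5`.
-/

open Filter Real Topology

theorem tendsto_div_pow_succ_nhdsGT_zero {f q : ℝ → ℝ} {n : ℕ} (hf₀ : f 0 = 0)
    (hf : ∀ x, HasDerivAt f (x ^ n * q x) x) (hq : ContinuousAt q 0) :
    Tendsto (fun t => f t / t ^ (n + 1)) (𝓝[>] 0) (𝓝 (q 0 / (n + 1))) := by
  have hpow : ∀ x : ℝ, HasDerivAt (fun t => t ^ (n + 1)) ((n + 1) * x ^ n) x := fun x => by
    simpa using hasDerivAt_pow (n + 1) x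
  refine HasDerivAt.lhopital_zero_nhdsGT (.of_forall hf) (.of_forall hpow) ?_ ?_ ?_ ?_
  · filter_upwards [self_mem_nhdsWithin] with x (hx : 0 < x)
    positivity
  · simpa [hf₀] using (hf 0).continuousAt.tendsto.mono_left nhdsWithin_le_nhds
  · simpa using ((continuous_pow (n + 1)).tendsto (0 : ℝ)).mono_left nhdsWithin_le_nhds
  · refine (hq.tendsto.div_const _).mono_left nhdsWithin_le_nhds |>.congr' ?_
    filter_upwards [self_mem_nhdsWithin] with x (hx : 0 < x)
    field_simp

noncomputable def zonostrophyRemainder (A B K t : ℝ) : ℝ :=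
  arctan (A * t / K) - arctan (B * t / K) + (B - A) * t / (K + t ^ 2)

theorem hasDerivAt_zonostrophyRemainder {A B K : ℝ} (hK : 0 < K)
    (hABK : A ^ 2 + A * B + B ^ 2 = 3 * K) (t : ℝ) :
    HasDerivAt (zonostrophyRemainder A B K)
      (t ^ 4 * ((B - A) * (K - A * B) * (A * B * t ^ 2 - K * (4 * K + A * B)) /
        ((K + t ^ 2) ^ 2 * (K ^ 2 + A ^ 2 * t ^ 2) * (K ^ 2 + B ^ 2 * t ^ 2)))) t := by
  have hKt : K + t ^ 2 ≠ 0 := by positivity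
  have hA := (((hasDerivAt_id t).const_mul A).div_const K).arctan
  have hB := (((hasDerivAt_id t).const_mul B).div_const K).arctan
  have hrat := ((hasDerivAt_id t).const_mul (B - A)).div ((hasDerivAt_pow 2 t).const_add K) hKt
  refine ((hA.sub hB).add hrat).congr_deriv ?_
  have hAt : K ^ 2 + A ^ 2 * t ^ 2 ≠ 0 := by positivity
  have hBt : K ^ 2 + B ^ 2 * t ^ 2 ≠ 0 := by positivity
  simp only [id]
  field_simp
  obtain rfl : K = (A ^ 2 + A * B + B ^ 2) / 3 := by linarith
  ring

theorem tendsto_zonostrophyRemainder_div_pow_five {A B K : ℝ} (hK : 0 < K)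
    (hABK : A ^ 2 + A * B + B ^ 2 = 3 * K) :
    Tendsto (fun t => zonostrophyRemainder A B K t / t ^ 5) (𝓝[>] 0)
      (𝓝 ((A - B) * (K - A * B) * (4 * K + A * B) / (5 * K ^ 5))) := by
  have h := tendsto_div_pow_succ_nhdsGT_zero (by simp [zonostrophyRemainder])
    (hasDerivAt_zonostrophyRemainder hK hABK) (.div (by fun_prop) (by fun_prop) (by positivity))
  convert h using 2
  field_simp
  ring

/-- lim_{ρ→∞} (−5ρ⁵/(8√3))(ζ(k) − 2√3 ω(k)/(βρ)) = k_x³(k_x²+5k_y²)/k¹⁰,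
where ζ(k) = arctan((k_y−√3k_x)/(ρk²)) − arctan((k_y+√3k_x)/(ρk²)) and
ω(k) = −β k_x/(k² + ρ⁻²). -/
theorem zonostrophy_small_scale_limit (β : ℝ) (hβ : 0 < β) (kx ky : ℝ)
    (hk : (kx, ky) ≠ (0, 0)) :
    Tendsto (fun ρ : ℝ =>
        (-5 * ρ ^ 5 / (8 * Real.sqrt 3)) *
          ((Real.arctan ((ky - Real.sqrt 3 * kx) / (ρ * (kx ^ 2 + ky ^ 2)))
              - Real.arctan ((ky + Real.sqrt 3 * kx) / (ρ * (kx ^ 2 + ky ^ 2))))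
            - 2 * Real.sqrt 3 * (-β * kx / ((kx ^ 2 + ky ^ 2) + (ρ ^ 2)⁻¹)) / (β * ρ)))
      atTop
      (nhds (kx ^ 3 * (kx ^ 2 + 5 * ky ^ 2) / (kx ^ 2 + ky ^ 2) ^ 5)) := by
  have hK : 0 < kx ^ 2 + ky ^ 2 := by
    by_contra! h
    have hx : kx = 0 := by nlinarith [sq_nonneg ky]
    have hy : ky = 0 := by nlinarith [sq_nonneg kx]
    exact hk (by simp [hx, hy])
  have h3 : √3 ^ 2 = 3 := sq_sqrt (by norm_num)
  set K := kx ^ 2 + ky ^ 2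
  set A := ky - √3 * kx
  set B := ky + √3 * kx
  have hBA : B - A = 2 * √3 * kx := by ring
  have hAB : A * B = ky ^ 2 - 3 * kx ^ 2 := by linear_combination -kx ^ 2 * h3
  have hABK : A ^ 2 + A * B + B ^ 2 = 3 * K := by linear_combination kx ^ 2 * h3
  have hlim := ((tendsto_zonostrophyRemainder_div_pow_five hK hABK).const_mul
    (-5 / (8 * √3))).comp tendsto_inv_atTop_nhdsGT_zero
  convert hlim.congr' ?_ using 2
  · rw [← neg_sub, hBA, hAB]
    field_simp
    ring
  filter_upwards [eventually_gt_atTop 0] with ρ hρ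
  simp only [Function.comp, zonostrophyRemainder, hBA]
  rw [show ∀ a, a * ρ⁻¹ / K = a / (ρ * K) from fun a => by field_simp]
  field_simp
  ring
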